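/- arXiv:1406.6130 — 4 statements merged into one kernel-verified Lean document; each statement's English description precedes it below -/
import Mathlib

section
/- Let Θ and X be finite nonempty sets, 𝒜 a nonempty set, ℓ : 𝒜 → ℝ^X a loss, and Φ an entropy on Δ_Θ differentiable on relint(Δ_Θ) whose entropic dual Φ* is differentiable on ℝ^Θ with, for every w ∈ ℝ^Θ, ∇Φ*(w) ∈ relint(Δ_Θ) and Φ*(w) = ⟨∇Φ*(w), w⟩ − Φ(∇Φ*(w)), and with ∇Φ*(∇Φ(μ)) = μ for all μ ∈ relint(Δ_Θ). If ℓ is Φ-mixable, then for every initial μ^0 ∈ relint(Δ_Θ), every T ∈ ℕ, every sequence of outcomes x^1, …, x^T ∈ X and every sequence of expert predictions A^1, …, A^T ∈ 𝒜^Θ, there exist predictions â^1, …, â^T ∈ 𝒜 such that for every θ ∈ Θ: Σ_{t=1}^T ℓ_{x^t}(â^t) ≤ Σ_{t=1}^T ℓ_{x^t}(A^t_θ) + D_Φ(δ_θ, μ^0), where δ_θ is the point mass on θ. -/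
open Finset

/-- The probability simplex on a finite type `Θ`. -/
def probSimplex (Θ : Type*) [Fintype Θ] : Set (Θ → ℝ) :=
  {μ | (∀ θ, 0 ≤ μ θ) ∧ ∑ θ, μ θ = 1}

/-- The relative interior of the probability simplex. -/
def probRelint (Θ : Type*) [Fintype Θ] : Set (Θ → ℝ) :=
  {μ | (∀ θ, 0 < μ θ) ∧ ∑ θ, μ θ = 1}

/-- Standard inner product on `ℝ^Θ`. -/
noncomputable def ip {Θ : Type*} [Fintype Θ] (μ v : Θ → ℝ) : ℝ := ∑ θ, μ θ * v θ

/-- Entropic dual: `Φ*(v) = sup_{μ ∈ Δ_Θ} ⟨μ, v⟩ - Φ(μ)`. -/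
noncomputable def edual {Θ : Type*} [Fintype Θ] (Φ : (Θ → ℝ) → ℝ) (v : Θ → ℝ) : ℝ :=
  sSup ((fun μ => ip μ v - Φ μ) '' probSimplex Θ)

/-- The continuous linear map `v ↦ ⟨w, v⟩` representing a gradient vector `w`. -/
noncomputable def pairCLM {Θ : Type*} [Fintype Θ] (w : Θ → ℝ) : (Θ → ℝ) →L[ℝ] ℝ :=
  ∑ θ, w θ • ContinuousLinearMap.proj θ

/-- Bregman divergence of `Φ` with gradient map `g`. -/
noncomputable def breg {Θ : Type*} [Fintype Θ] (Φ : (Θ → ℝ) → ℝ)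
    (g : (Θ → ℝ) → Θ → ℝ) (μ μ' : Θ → ℝ) : ℝ :=
  Φ μ - Φ μ' - ip (μ - μ') (g μ')

/-!
Play the aggregating algorithm in dual coordinates: keep the potential
`v_t = ∇Φ(μ⁰) - Σ_{s<t} ℓ_{x^s}(A^s)` and predict by mixability at `μ_t = ∇Φ*(v_t)`.
Since `μ_t` maximizes `⟨·, v_t⟩ - Φ` at a point of the relative interior, `∇Φ(μ_t)` and `v_t`
agree on zero-sum directions, and the mixability bound becomes
`ℓ_{x^t}(â^t) ≤ Φ*(v_t) - Φ*(v_{t+1})`. Telescoping, `Φ*(v_0) = ⟨μ⁰, ∇Φ(μ⁰)⟩ - Φ(μ⁰)`, and the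
Fenchel–Young bound `Φ*(v_T) ≥ v_T(θ) - Φ(δ_θ)` give the regret `D_Φ(δ_θ, μ⁰)`.
Lower semicontinuity on the compact simplex keeps the supremum defining `Φ*` bounded, so it is
not the junk value of `sSup`.
-/

open Matrix Filter Topology

section Simplex

variable {Θ : Type*} [Fintype Θ]

lemma ip_eq_dotProduct (μ v : Θ → ℝ) : ip μ v = μ ⬝ᵥ v := rfl

lemma pairCLM_apply (w v : Θ → ℝ) : pairCLM w v = w ⬝ᵥ v := by
  simp [pairCLM, dotProduct]

lemma probRelint_subset_probSimplex : probRelint Θ ⊆ probSimplex Θ :=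
  fun _ hμ => ⟨fun θ => (hμ.1 θ).le, hμ.2⟩

lemma bddAbove_image_probSimplex {Φ : (Θ → ℝ) → ℝ}
    (hlsc : LowerSemicontinuousOn Φ (probSimplex Θ)) (w : Θ → ℝ) :
    BddAbove ((fun μ => ip μ w - Φ μ) '' probSimplex Θ) := by
  have hcont : Continuous fun μ : Θ → ℝ => -ip μ w := by
    simp only [ip]
    fun_prop
  obtain ⟨B, hB⟩ := (hlsc.add hcont.continuousOn.lowerSemicontinuousOn).bddBelow_of_isCompact
    (isCompact_stdSimplex ℝ Θ)
  refine ⟨-B, ?_⟩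
  rintro _ ⟨μ, hμ, rfl⟩
  have hBμ := hB ⟨μ, hμ, rfl⟩
  simp only at hBμ ⊢
  linarith

theorem ip_sub_le_edual {Φ : (Θ → ℝ) → ℝ} (hlsc : LowerSemicontinuousOn Φ (probSimplex Θ))
    {μ : Θ → ℝ} (hμ : μ ∈ probSimplex Θ) (w : Θ → ℝ) :
    ip μ w - Φ μ ≤ edual Φ w :=
  le_csSup (bddAbove_image_probSimplex hlsc w) ⟨μ, hμ, rfl⟩

/- For `Σ d = 0` the line `t ↦ μ + t • d` stays in the simplex near `t = 0`, where it therefore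
has a local maximum of `⟨·, w⟩ - Φ`. -/
theorem dotProduct_eq_of_isMaxOn {Φ : (Θ → ℝ) → ℝ} {μ G w : Θ → ℝ} (hμ : μ ∈ probRelint Θ)
    (hΦ : HasFDerivAt Φ (pairCLM G) μ)
    (hmax : IsMaxOn (fun ν => ip ν w - Φ ν) (probSimplex Θ) μ)
    {d : Θ → ℝ} (hd : ∑ θ, d θ = 0) : d ⬝ᵥ G = d ⬝ᵥ w := by
  have hline : HasDerivAt (fun t : ℝ => μ + t • d) d 0 := by
    simpa using ((hasDerivAt_id (0 : ℝ)).smul_const d).const_add μ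
  have hpos : ∀ᶠ ν in 𝓝 μ, ∀ θ, 0 < ν θ :=
    eventually_all.2 fun θ => (continuous_apply θ).continuousAt.eventually (lt_mem_nhds (hμ.1 θ))
  have hmem : ∀ᶠ t in 𝓝 (0 : ℝ), μ + t • d ∈ probSimplex Θ := by
    have hline_tendsto : Tendsto (fun t : ℝ => μ + t • d) (𝓝 0) (𝓝 μ) := by
      simpa using hline.continuousAt.tendsto
    filter_upwards [hline_tendsto.eventually hpos] with t ht
    refine ⟨fun θ => (ht θ).le, ?_⟩
    simp [Finset.sum_add_distrib, ← Finset.mul_sum, hμ.2, hd]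
  have hlocal : IsLocalMax (fun t : ℝ => ip (μ + t • d) w - Φ (μ + t • d)) 0 := by
    filter_upwards [hmem] with t ht
    simpa using hmax ht
  have hderiv : HasDerivAt (fun t : ℝ => ip (μ + t • d) w - Φ (μ + t • d)) (d ⬝ᵥ w - G ⬝ᵥ d) 0 := by
    have hΦ0 : HasFDerivAt Φ (pairCLM G) (μ + (0 : ℝ) • d) := by simpa using hΦ
    have hΦline := hΦ0.comp_hasDerivAt (0 : ℝ) hline
    rw [pairCLM_apply] at hΦline
    refine HasDerivAt.sub ?_ hΦline
    simp only [ip_eq_dotProduct, add_dotProduct, smul_dotProduct, smul_eq_mul]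
    simpa using ((hasDerivAt_id (0 : ℝ)).mul_const (d ⬝ᵥ w)).const_add (μ ⬝ᵥ w)
  have hzero := hlocal.hasDerivAt_eq_zero hderiv
  rw [dotProduct_comm G d] at hzero
  linarith

end Simplex

section Mixability

variable {Θ X 𝒜 : Type*} [Fintype Θ] {Φ : (Θ → ℝ) → ℝ} {g gs : (Θ → ℝ) → Θ → ℝ}

theorem isMaxOn_of_edual_eq (hlsc : LowerSemicontinuousOn Φ (probSimplex Θ))
    (hfenchel : ∀ w : Θ → ℝ, edual Φ w = ip (gs w) w - Φ (gs w)) (w : Θ → ℝ) :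
    IsMaxOn (fun ν => ip ν w - Φ ν) (probSimplex Θ) (gs w) :=
  isMaxOn_iff.2 fun _ hν => hfenchel w ▸ ip_sub_le_edual hlsc hν w

theorem ip_add_breg_eq_edual_sub (hlsc : LowerSemicontinuousOn Φ (probSimplex Θ))
    (hg : ∀ μ ∈ probRelint Θ, HasFDerivAt Φ (pairCLM (g μ)) μ)
    (hgsmem : ∀ w : Θ → ℝ, gs w ∈ probRelint Θ)
    (hfenchel : ∀ w : Θ → ℝ, edual Φ w = ip (gs w) w - Φ (gs w))
    (v c : Θ → ℝ) {μ : Θ → ℝ} (hμ : μ ∈ probSimplex Θ) :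
    ip μ c + breg Φ g μ (gs v) = edual Φ v - (ip μ (v - c) - Φ μ) := by
  have hgrad : (μ - gs v) ⬝ᵥ g (gs v) = (μ - gs v) ⬝ᵥ v :=
    dotProduct_eq_of_isMaxOn (hgsmem v) (hg _ (hgsmem v)) (isMaxOn_of_edual_eq hlsc hfenchel v)
      (by simp [Finset.sum_sub_distrib, hμ.2, (hgsmem v).2])
  rw [breg, hfenchel v]
  simp only [ip_eq_dotProduct, sub_dotProduct, dotProduct_sub] at hgrad ⊢
  linarith

theorem exists_loss_le_edual_sub (ℓ : 𝒜 → X → ℝ) (hlsc : LowerSemicontinuousOn Φ (probSimplex Θ))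
    (hg : ∀ μ ∈ probRelint Θ, HasFDerivAt Φ (pairCLM (g μ)) μ)
    (hgsmem : ∀ w : Θ → ℝ, gs w ∈ probRelint Θ)
    (hfenchel : ∀ w : Θ → ℝ, edual Φ w = ip (gs w) w - Φ (gs w))
    (hmix : ∀ A : Θ → 𝒜, ∀ μ ∈ probRelint Θ, ∃ ahat : 𝒜, ∀ x : X,
      ℓ ahat x ≤ sInf ((fun μ' => ip μ' (fun θ => ℓ (A θ) x) + breg Φ g μ' μ) ''
        probSimplex Θ))
    (B : Θ → 𝒜) (v : Θ → ℝ) :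
    ∃ a : 𝒜, ∀ x : X, ℓ a x ≤ edual Φ v - edual Φ (v - fun θ => ℓ (B θ) x) := by
  obtain ⟨a, ha⟩ := hmix B (gs v) (hgsmem v)
  refine ⟨a, fun x => ?_⟩
  set c : Θ → ℝ := fun θ => ℓ (B θ) x
  have hkey : ∀ μ ∈ probSimplex Θ, ip μ c + breg Φ g μ (gs v) = edual Φ v - (ip μ (v - c) - Φ μ) :=
    fun _ hμ => ip_add_breg_eq_edual_sub hlsc hg hgsmem hfenchel v c hμ
  have hgs_mem : gs (v - c) ∈ probSimplex Θ := probRelint_subset_probSimplex (hgsmem _)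
  refine (ha x).trans (csInf_le ⟨edual Φ v - edual Φ (v - c), ?_⟩ ⟨gs (v - c), hgs_mem, ?_⟩)
  · rintro _ ⟨μ, hμ, rfl⟩
    linarith [hkey μ hμ, ip_sub_le_edual hlsc hμ (v - c)]
  · exact (hkey _ hgs_mem).trans (by rw [hfenchel (v - c)])

end Mixability

theorem exists_sum_loss_le_of_forall_exists_loss_le {Θ X 𝒜 : Type*} (ℓ : 𝒜 → X → ℝ)
    (F : (Θ → ℝ) → ℝ)
    (hstep : ∀ (B : Θ → 𝒜) (v : Θ → ℝ), ∃ a : 𝒜, ∀ x : X,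
      ℓ a x ≤ F v - F (v - fun θ => ℓ (B θ) x)) :
    ∀ (T : ℕ) (x : Fin T → X) (A : Fin T → Θ → 𝒜) (v : Θ → ℝ), ∃ ahat : Fin T → 𝒜,
      ∑ t, ℓ (ahat t) (x t) ≤ F v - F (v - ∑ t, fun θ => ℓ (A t θ) (x t))
  | 0, _, _, v => ⟨finZeroElim, by simp⟩
  | T + 1, x, A, v => by
    obtain ⟨a, ha⟩ := hstep (A 0) v
    obtain ⟨ahat, hahat⟩ := exists_sum_loss_le_of_forall_exists_loss_le ℓ F hstep T
      (Fin.tail x) (Fin.tail A) (v - fun θ => ℓ (A 0 θ) (x 0))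
    refine ⟨Fin.cons a ahat, ?_⟩
    rw [Fin.sum_univ_succ, Fin.sum_univ_succ, ← sub_sub]
    simp only [Fin.tail] at hahat
    simp only [Fin.cons_zero, Fin.cons_succ]
    linarith [ha (x 0)]

theorem stmt_8_general {Θ X 𝒜 : Type*} [Fintype Θ] [DecidableEq Θ]
    (ℓ : 𝒜 → X → ℝ)
    (Φ : (Θ → ℝ) → ℝ)
    (hlsc : LowerSemicontinuousOn Φ (probSimplex Θ))
    (g gs : (Θ → ℝ) → Θ → ℝ)
    (hg : ∀ μ ∈ probRelint Θ, HasFDerivAt Φ (pairCLM (g μ)) μ)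
    (hgsmem : ∀ w : Θ → ℝ, gs w ∈ probRelint Θ)
    (hfenchel : ∀ w : Θ → ℝ, edual Φ w = ip (gs w) w - Φ (gs w))
    (hinv : ∀ μ ∈ probRelint Θ, gs (g μ) = μ)
    (hmix : ∀ A : Θ → 𝒜, ∀ μ ∈ probRelint Θ, ∃ ahat : 𝒜, ∀ x : X,
      ℓ ahat x ≤ sInf ((fun μ' => ip μ' (fun θ => ℓ (A θ) x) + breg Φ g μ' μ) ''
        probSimplex Θ))
    (μ0 : Θ → ℝ) (hμ0 : μ0 ∈ probRelint Θ)
    (T : ℕ) (x : Fin T → X) (A : Fin T → Θ → 𝒜) :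
    ∃ ahat : Fin T → 𝒜, ∀ θ : Θ,
      ∑ t, ℓ (ahat t) (x t)
        ≤ ∑ t, ℓ (A t θ) (x t)
          + breg Φ g (fun θ' => if θ' = θ then 1 else 0) μ0 := by
  obtain ⟨ahat, hahat⟩ := exists_sum_loss_le_of_forall_exists_loss_le ℓ (edual Φ)
    (exists_loss_le_edual_sub ℓ hlsc hg hgsmem hfenchel hmix) T x A (g μ0)
  refine ⟨ahat, fun θ => ?_⟩
  have hsingle : (fun θ' => if θ' = θ then (1 : ℝ) else 0) = Pi.single θ 1 := by
    ext θ'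
    simp [Pi.single_apply]
  have hstart : edual Φ (g μ0) = ip μ0 (g μ0) - Φ μ0 := by rw [hfenchel, hinv μ0 hμ0]
  have hend := ip_sub_le_edual hlsc (single_mem_stdSimplex ℝ θ)
    (g μ0 - ∑ t, fun θ' => ℓ (A t θ') (x t))
  rw [breg, hsingle]
  simp only [ip_eq_dotProduct, single_dotProduct, sub_dotProduct, one_mul, Pi.sub_apply,
    Finset.sum_apply] at hstart hend ⊢
  linarith

/-- Φ-mixability implies constant regret against each expert. -/
theorem stmt_8 {Θ X 𝒜 : Type*} [Fintype Θ] [DecidableEq Θ] [Nonempty Θ] [Fintype X] [Nonempty X]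
    [Nonempty 𝒜]
    (ℓ : 𝒜 → X → ℝ)
    (Φ : (Θ → ℝ) → ℝ)
    (hconv : ConvexOn ℝ (probSimplex Θ) Φ)
    (hlsc : LowerSemicontinuousOn Φ (probSimplex Θ))
    (g gs : (Θ → ℝ) → Θ → ℝ)
    (hg : ∀ μ ∈ probRelint Θ, HasFDerivAt Φ (pairCLM (g μ)) μ)
    (hgs : ∀ w : Θ → ℝ, HasFDerivAt (edual Φ) (pairCLM (gs w)) w)
    (hgsmem : ∀ w : Θ → ℝ, gs w ∈ probRelint Θ)
    (hfenchel : ∀ w : Θ → ℝ, edual Φ w = ip (gs w) w - Φ (gs w))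
    (hinv : ∀ μ ∈ probRelint Θ, gs (g μ) = μ)
    (hmix : ∀ A : Θ → 𝒜, ∀ μ ∈ probRelint Θ, ∃ ahat : 𝒜, ∀ x : X,
      ℓ ahat x ≤ sInf ((fun μ' => ip μ' (fun θ => ℓ (A θ) x) + breg Φ g μ' μ) ''
        probSimplex Θ))
    (μ0 : Θ → ℝ) (hμ0 : μ0 ∈ probRelint Θ)
    (T : ℕ) (x : Fin T → X) (A : Fin T → Θ → 𝒜) :
    ∃ ahat : Fin T → 𝒜, ∀ θ : Θ,
      ∑ t, ℓ (ahat t) (x t)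
        ≤ ∑ t, ℓ (A t θ) (x t)
          + breg Φ g (fun θ' => if θ' = θ then 1 else 0) μ0 :=
  stmt_8_general ℓ Φ hlsc g gs hg hgsmem hfenchel hinv hmix μ0 hμ0 T x A
end

section
/- Let Θ and X be finite nonempty sets, 𝒜 a nonempty set, η > 0, and ℓ : 𝒜 → ℝ^X a loss that is η-mixable: for all A ∈ 𝒜^Θ and all μ ∈ Δ_Θ there exists â ∈ 𝒜 such that for all x ∈ X, ℓ_x(â) ≤ −η⁻¹ log Σ_θ μ_θ exp(−η ℓ_x(A_θ)). Then for every T ∈ ℕ, every sequence of outcomes x^1, …, x^T ∈ X and every sequence of expert predictions A^1, …, A^T ∈ 𝒜^Θ, there exist predictions â^1, …, â^T ∈ 𝒜 such that Σ_{t=1}^T ℓ_{x^t}(â^t) ≤ min_{θ∈Θ} Σ_{t=1}^T ℓ_{x^t}(A^t_θ) + η⁻¹ log |Θ|. -/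
open Finset

/-!
Aggregating algorithm: at round `t`, play the prediction that mixability provides for the
exponential weights `μ_t θ ∝ exp (-η L_t θ)`, where `L_t θ` is the cumulative loss of expert `θ`
before round `t`. With the potential `Φ_t = log ∑ θ, exp (-η L_t θ)`, the mixability bound is
exactly `η⁻¹ (Φ_t - Φ_{t+1})`, so the learner's total loss is at most
`η⁻¹ (Φ_0 - Φ_T) = η⁻¹ (log |Θ| - Φ_T)`, and `Φ_T ≥ -η L_T θ` for every expert `θ`.
-/

open Real

section ExpWeights

variable {Θ : Type*} [Fintype Θ]

noncomputable def logSumExp (v : Θ → ℝ) : ℝ := log (∑ θ, exp (v θ))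

noncomputable def expWeights (v : Θ → ℝ) (θ : Θ) : ℝ := exp (v θ) / ∑ θ', exp (v θ')

lemma sum_exp_pos [Nonempty Θ] (v : Θ → ℝ) : 0 < ∑ θ, exp (v θ) :=
  sum_pos (fun θ _ => exp_pos (v θ)) univ_nonempty

lemma expWeights_mem_probSimplex [Nonempty Θ] (v : Θ → ℝ) : expWeights v ∈ probSimplex Θ := by
  refine ⟨fun θ => (div_pos (exp_pos _) (sum_exp_pos v)).le, ?_⟩
  simp only [expWeights]
  rw [← sum_div, div_self (sum_exp_pos v).ne']

lemma le_logSumExp (v : Θ → ℝ) (θ : Θ) : v θ ≤ logSumExp v := by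
  have hle : exp (v θ) ≤ ∑ θ', exp (v θ') :=
    single_le_sum (fun θ' _ => (exp_pos (v θ')).le) (mem_univ θ)
  exact (le_log_iff_exp_le ((exp_pos _).trans_le hle)).2 hle

lemma logSumExp_zero : logSumExp (fun _ : Θ => (0 : ℝ)) = log (Fintype.card Θ) := by
  simp [logSumExp]

lemma log_sum_expWeights_mul_exp [Nonempty Θ] (v w : Θ → ℝ) :
    log (∑ θ, expWeights v θ * exp (w θ)) = logSumExp (v + w) - logSumExp v := by
  have hsum : ∑ θ, expWeights v θ * exp (w θ) = (∑ θ, exp ((v + w) θ)) / ∑ θ, exp (v θ) := by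
    simp only [expWeights, Pi.add_apply, exp_add, div_mul_eq_mul_div, sum_div]
  rw [hsum, log_div (sum_exp_pos _).ne' (sum_exp_pos v).ne', logSumExp, logSumExp]

end ExpWeights

section AggregatingAlgorithm

variable {Θ : Type*} [Fintype Θ]

noncomputable def mixLoss (η : ℝ) (μ v : Θ → ℝ) : ℝ :=
  -η⁻¹ * log (∑ θ, μ θ * exp (-(η * v θ)))

noncomputable def expPotential (η : ℝ) (L : ℕ → Θ → ℝ) (t : ℕ) : ℝ :=
  logSumExp fun θ => -(η * ∑ s ∈ range t, L s θ)

noncomputable def aggregatingWeights (η : ℝ) (L : ℕ → Θ → ℝ) (t : ℕ) : Θ → ℝ :=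
  expWeights fun θ => -(η * ∑ s ∈ range t, L s θ)

lemma mixLoss_aggregatingWeights [Nonempty Θ] (η : ℝ) (L : ℕ → Θ → ℝ) (t : ℕ) :
    mixLoss η (aggregatingWeights η L t) (L t)
      = η⁻¹ * (expPotential η L t - expPotential η L (t + 1)) := by
  have hstep : (fun θ => -(η * ∑ s ∈ range t, L s θ)) + (fun θ => -(η * L t θ))
      = fun θ => -(η * ∑ s ∈ range (t + 1), L s θ) := by
    funext θ
    simp only [Pi.add_apply, sum_range_succ]
    ring
  rw [mixLoss, aggregatingWeights, log_sum_expWeights_mul_exp, hstep, expPotential, expPotential]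
  ring

lemma sum_mixLoss_aggregatingWeights_le [Nonempty Θ] {η : ℝ} (hη : 0 < η)
    (L : ℕ → Θ → ℝ) (T : ℕ) (θ : Θ) :
    ∑ t ∈ range T, mixLoss η (aggregatingWeights η L t) (L t)
      ≤ ∑ t ∈ range T, L t θ + η⁻¹ * log (Fintype.card Θ) := by
  have hpot : -(η * ∑ t ∈ range T, L t θ) ≤ expPotential η L T :=
    le_logSumExp (fun θ => -(η * ∑ s ∈ range T, L s θ)) θ
  have hpot0 : expPotential η L 0 = log (Fintype.card Θ) := by
    simpa [expPotential] using logSumExp_zero (Θ := Θ)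
  calc ∑ t ∈ range T, mixLoss η (aggregatingWeights η L t) (L t)
      = η⁻¹ * (log (Fintype.card Θ) - expPotential η L T) := by
        simp only [mixLoss_aggregatingWeights, ← mul_sum, sum_range_sub', hpot0]
    _ ≤ η⁻¹ * (log (Fintype.card Θ) + η * ∑ t ∈ range T, L t θ) := by
        gcongr
        linarith
    _ = ∑ t ∈ range T, L t θ + η⁻¹ * log (Fintype.card Θ) := by
        field_simp
        ring

end AggregatingAlgorithm

theorem stmt_10_general {Θ X 𝒜 : Type*} [Fintype Θ] [Nonempty Θ]
    (η : ℝ) (hη : 0 < η) (ℓ : 𝒜 → X → ℝ)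
    (hmix : ∀ A : Θ → 𝒜, ∀ μ ∈ probSimplex Θ, ∃ ahat : 𝒜, ∀ x : X,
      ℓ ahat x ≤ -η⁻¹ * Real.log (∑ θ, μ θ * Real.exp (-(η * ℓ (A θ) x))))
    (T : ℕ) (x : Fin T → X) (A : Fin T → Θ → 𝒜) :
    ∃ ahat : Fin T → 𝒜, ∀ θ : Θ,
      ∑ t, ℓ (ahat t) (x t)
        ≤ ∑ t, ℓ (A t θ) (x t) + η⁻¹ * Real.log (Fintype.card Θ) := by
  let L : ℕ → Θ → ℝ := fun s θ => if h : s < T then ℓ (A ⟨s, h⟩ θ) (x ⟨s, h⟩) else 0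
  have hL : ∀ (t : Fin T) θ, L t θ = ℓ (A t θ) (x t) := fun t _ => dif_pos t.isLt
  choose ahat hahat using fun t : Fin T =>
    hmix (A t) (aggregatingWeights η L t) (expWeights_mem_probSimplex _)
  refine ⟨ahat, fun θ => ?_⟩
  calc ∑ t, ℓ (ahat t) (x t)
      ≤ ∑ t : Fin T, mixLoss η (aggregatingWeights η L t) (L t) :=
        sum_le_sum fun t _ => by simpa only [mixLoss, hL] using hahat t (x t)
    _ = ∑ t ∈ range T, mixLoss η (aggregatingWeights η L t) (L t) :=
        Fin.sum_univ_eq_sum_range (fun t => mixLoss η (aggregatingWeights η L t) (L t)) T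
    _ ≤ ∑ t ∈ range T, L t θ + η⁻¹ * log (Fintype.card Θ) :=
        sum_mixLoss_aggregatingWeights_le hη L T θ
    _ = ∑ t, ℓ (A t θ) (x t) + η⁻¹ * log (Fintype.card Θ) := by
        rw [← Fin.sum_univ_eq_sum_range (fun t => L t θ)]
        simp only [hL]

/-- Classical mixability implies constant regret `η⁻¹ log |Θ|` (Vovk). -/
theorem stmt_10 {Θ X 𝒜 : Type*} [Fintype Θ] [Nonempty Θ] [Fintype X] [Nonempty X]
    [Nonempty 𝒜]
    (η : ℝ) (hη : 0 < η) (ℓ : 𝒜 → X → ℝ)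
    (hmix : ∀ A : Θ → 𝒜, ∀ μ ∈ probSimplex Θ, ∃ ahat : 𝒜, ∀ x : X,
      ℓ ahat x ≤ -η⁻¹ * Real.log (∑ θ, μ θ * Real.exp (-(η * ℓ (A θ) x))))
    (T : ℕ) (x : Fin T → X) (A : Fin T → Θ → 𝒜) :
    ∃ ahat : Fin T → 𝒜, ∀ θ : Θ,
      ∑ t, ℓ (ahat t) (x t)
        ≤ ∑ t, ℓ (A t θ) (x t) + η⁻¹ * Real.log (Fintype.card Θ) :=
  stmt_10_general η hη ℓ hmix T x A
end

section
/- Let Θ be a finite nonempty set, X a finite set with |X| ≥ 2, and 𝒜 a nonempty set. Let ℓ : 𝒜 → ℝ^X be a loss such that for every p ∈ Δ_X the infimum inf_{a∈𝒜} ⟨p, ℓ(a)⟩ is attained, and such that the Bayes risk L(p) := inf_{a∈𝒜} ⟨p, ℓ(a)⟩ is strictly concave on Δ_X. Then for any two distinct μ*, μ' ∈ Δ_Θ there exist expert predictions A ∈ 𝒜^Θ and outcomes x*, x' ∈ X such that for every â ∈ 𝒜 at least one of the following strict inequalities holds: ⟨μ*, ℓ_{x*}(A)⟩ < ℓ_{x*}(â),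 or ⟨μ', ℓ_{x'}(A)⟩ < ℓ_{x'}(â). -/
open Finset

/-! Extend the Bayes risk `L` to all weight vectors `w ∈ ℝ^X`; it is positively homogeneous, so
strict concavity on the simplex turns into strict superadditivity `L w₁ + L w₂ < L (w₁ + w₂)` for
non-proportional nonnegative `w₁, w₂`. Pick `θ₀` with `p := μ* θ₀ ≠ q := μ' θ₀` and two outcomes
`x* ≠ x'`, take `w₁ = (p, q)` and `w₂ = (1 - p, 1 - q)` on `(x*, x')`, Bayes acts `a, b` for them,
and let expert `θ₀` predict `a` and all others `b`. The mixture losses at `x*` under `μ*` and at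
`x'` under `μ'` then add up to `L w₁ + L w₂ < L (1, 1) ≤ ℓ_{x*}(â) + ℓ_{x'}(â)`. -/

-- Takes the junk value `0` at weights where the infimum is unbounded below.
noncomputable def bayesRisk {X 𝒜 : Type*} [Fintype X] (ℓ : 𝒜 → X → ℝ) (p : X → ℝ) : ℝ :=
  ⨅ a, ∑ x, p x * ℓ a x

def IsBayesAct {X 𝒜 : Type*} [Fintype X] (ℓ : 𝒜 → X → ℝ) (p : X → ℝ) (a : 𝒜) : Prop :=
  ∀ a', ∑ x, p x * ℓ a x ≤ ∑ x, p x * ℓ a' x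

section BayesRisk

variable {X 𝒜 : Type*} [Fintype X] {ℓ : 𝒜 → X → ℝ} {p : X → ℝ} {a : 𝒜}

lemma bayesRisk_smul (ℓ : 𝒜 → X → ℝ) {c : ℝ} (hc : 0 ≤ c) (p : X → ℝ) :
    bayesRisk ℓ (c • p) = c * bayesRisk ℓ p := by
  simp only [bayesRisk, Pi.smul_apply, smul_eq_mul, mul_assoc, ← Finset.mul_sum]
  exact (Real.mul_iInf_of_nonneg hc _).symm

lemma IsBayesAct.bayesRisk_eq (ha : IsBayesAct ℓ p a) : bayesRisk ℓ p = ∑ x, p x * ℓ a x :=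
  have : Nonempty 𝒜 := ⟨a⟩
  le_antisymm (ciInf_le ⟨_, Set.forall_mem_range.2 ha⟩ a) (le_ciInf ha)

lemma IsBayesAct.smul (ha : IsBayesAct ℓ p a) {c : ℝ} (hc : 0 ≤ c) : IsBayesAct ℓ (c • p) a := by
  intro a'
  simp only [Pi.smul_apply, smul_eq_mul, mul_assoc, ← Finset.mul_sum]
  exact mul_le_mul_of_nonneg_left (ha a') hc

lemma inv_sum_smul_mem_probSimplex {w : X → ℝ} (hw : 0 ≤ w) (hs : 0 < ∑ x, w x) :
    (∑ x, w x)⁻¹ • w ∈ probSimplex X := by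
  refine ⟨fun x => smul_nonneg (inv_nonneg.2 hs.le) (hw x), ?_⟩
  simp only [Pi.smul_apply, smul_eq_mul, ← Finset.mul_sum, inv_mul_cancel₀ hs.ne']

lemma exists_isBayesAct (hatt : ∀ p ∈ probSimplex X, ∃ a, IsBayesAct ℓ p a) {w : X → ℝ}
    (hw : 0 ≤ w) (hs : 0 < ∑ x, w x) : ∃ a, IsBayesAct ℓ w a := by
  obtain ⟨a, ha⟩ := hatt _ (inv_sum_smul_mem_probSimplex hw hs)
  refine ⟨a, ?_⟩
  simpa only [smul_inv_smul₀ hs.ne'] using ha.smul hs.le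

end BayesRisk

lemma StrictConcaveOn.add_lt_of_probSimplex {X : Type*} [Fintype X] {f : (X → ℝ) → ℝ}
    (hf : StrictConcaveOn ℝ (probSimplex X) f) (hhom : ∀ c : ℝ, 0 < c → ∀ w, f (c • w) = c * f w)
    {w₁ w₂ : X → ℝ} (hw₁ : 0 ≤ w₁) (hw₂ : 0 ≤ w₂) (hs₁ : 0 < ∑ x, w₁ x) (hs₂ : 0 < ∑ x, w₂ x)
    (hprop : ∀ c : ℝ, w₂ ≠ c • w₁) : f w₁ + f w₂ < f (w₁ + w₂) := by
  set s₁ := ∑ x, w₁ x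
  set s₂ := ∑ x, w₂ x
  have hs : 0 < s₁ + s₂ := add_pos hs₁ hs₂
  have huv : s₁⁻¹ • w₁ ≠ s₂⁻¹ • w₂ := fun h =>
    hprop (s₂ * s₁⁻¹) (by rw [mul_smul, h, smul_inv_smul₀ hs₂.ne'])
  have hcomb : (s₁ / (s₁ + s₂)) • s₁⁻¹ • w₁ + (s₂ / (s₁ + s₂)) • s₂⁻¹ • w₂
      = (s₁ + s₂)⁻¹ • (w₁ + w₂) := by
    rw [smul_smul, smul_smul, smul_add]
    congr 2 <;> field_simp
  have key := hf.2 (inv_sum_smul_mem_probSimplex hw₁ hs₁) (inv_sum_smul_mem_probSimplex hw₂ hs₂)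
    huv (div_pos hs₁ hs) (div_pos hs₂ hs) (by field_simp)
  rw [hcomb, hhom _ (inv_pos.2 hs), hhom _ (inv_pos.2 hs₁), hhom _ (inv_pos.2 hs₂)] at key
  simp only [smul_eq_mul] at key
  field_simp at key
  linarith

lemma sum_add_sum_lt_of_isBayesAct {X 𝒜 : Type*} [Fintype X] {ℓ : 𝒜 → X → ℝ}
    (hL : StrictConcaveOn ℝ (probSimplex X) (bayesRisk ℓ))
    {w₁ w₂ : X → ℝ} (hw₁ : 0 ≤ w₁) (hw₂ : 0 ≤ w₂) (hs₁ : 0 < ∑ x, w₁ x) (hs₂ : 0 < ∑ x, w₂ x)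
    (hprop : ∀ c : ℝ, w₂ ≠ c • w₁) {a b : 𝒜} (ha : IsBayesAct ℓ w₁ a) (hb : IsBayesAct ℓ w₂ b)
    (a' : 𝒜) :
    ∑ x, w₁ x * ℓ a x + ∑ x, w₂ x * ℓ b x < ∑ x, (w₁ + w₂) x * ℓ a' x := by
  have hbdd : BddBelow (Set.range fun a' => ∑ x, (w₁ + w₂) x * ℓ a' x) := by
    refine ⟨∑ x, w₁ x * ℓ a x + ∑ x, w₂ x * ℓ b x, Set.forall_mem_range.2 fun a' => ?_⟩
    simp only [Pi.add_apply, add_mul, Finset.sum_add_distrib]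
    exact add_le_add (ha a') (hb a')
  calc _ = bayesRisk ℓ w₁ + bayesRisk ℓ w₂ := by rw [ha.bayesRisk_eq, hb.bayesRisk_eq]
    _ < bayesRisk ℓ (w₁ + w₂) :=
      hL.add_lt_of_probSimplex (fun c hc => bayesRisk_smul ℓ hc.le) hw₁ hw₂ hs₁ hs₂ hprop
    _ ≤ _ := ciInf_le hbdd a'

lemma sum_single_add_single_mul {X : Type*} [Fintype X] [DecidableEq X] (i j : X) (s t : ℝ)
    (g : X → ℝ) :
    ∑ x, (Pi.single i s + Pi.single j t : X → ℝ) x * g x = s * g i + t * g j := by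
  simp [add_mul, Finset.sum_add_distrib, Pi.single_apply, ite_mul]

lemma single_add_single_ne_smul {X : Type*} [DecidableEq X] {i j : X} (hij : i ≠ j) {s t : ℝ}
    (hst : s ≠ t) (c : ℝ) :
    (Pi.single i (1 - s) + Pi.single j (1 - t) : X → ℝ) ≠ c • (Pi.single i s + Pi.single j t) := by
  intro h
  have hi := congrFun h i
  have hj := congrFun h j
  simp only [Pi.add_apply, Pi.smul_apply, smul_eq_mul, Pi.single_eq_same,
    Pi.single_eq_of_ne hij, Pi.single_eq_of_ne hij.symm, add_zero, zero_add] at hi hj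
  have : (s - t) * (1 + c) = 0 := by linear_combination hj - hi
  rcases mul_eq_zero.1 this with h | h
  · exact hst (sub_eq_zero.1 h)
  · rw [show c = -1 by linarith] at hi
    linarith

lemma sum_mul_update_const {Θ α : Type*} [Fintype Θ] [DecidableEq Θ] {μ : Θ → ℝ}
    (hμ : ∑ θ, μ θ = 1) (θ₀ : Θ) (a b : α) (g : α → ℝ) :
    ∑ θ, μ θ * g (Function.update (fun _ => b) θ₀ a θ) = μ θ₀ * g a + (1 - μ θ₀) * g b := by
  rw [← Finset.add_sum_erase _ _ (Finset.mem_univ θ₀), Function.update_self]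
  rw [Finset.sum_congr rfl fun θ hθ => by rw [Function.update_of_ne (Finset.ne_of_mem_erase hθ)]]
  rw [← Finset.sum_mul, Finset.sum_erase_eq_sub (Finset.mem_univ θ₀), hμ]

lemma mem_Icc_of_mem_probSimplex {Θ : Type*} [Fintype Θ] {μ : Θ → ℝ} (hμ : μ ∈ probSimplex Θ)
    (θ : Θ) : μ θ ∈ Set.Icc 0 1 :=
  ⟨hμ.1 θ, hμ.2 ▸ Finset.single_le_sum (fun i _ => hμ.1 i) (Finset.mem_univ θ)⟩

theorem stmt_16_general {Θ X 𝒜 : Type*} [Fintype Θ] [Fintype X]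
    (hX : 2 ≤ Fintype.card X)
    (ℓ : 𝒜 → X → ℝ)
    (hatt : ∀ p ∈ probSimplex X, ∃ a : 𝒜, ∀ a' : 𝒜,
      ∑ x, p x * ℓ a x ≤ ∑ x, p x * ℓ a' x)
    (hL : StrictConcaveOn ℝ (probSimplex X) (fun p => ⨅ a : 𝒜, ∑ x, p x * ℓ a x))
    (μs μ' : Θ → ℝ) (hμs : μs ∈ probSimplex Θ) (hμ' : μ' ∈ probSimplex Θ)
    (hne : μs ≠ μ') :
    ∃ A : Θ → 𝒜, ∃ xs x' : X, ∀ ahat : 𝒜,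
      (∑ θ, μs θ * ℓ (A θ) xs < ℓ ahat xs) ∨ (∑ θ, μ' θ * ℓ (A θ) x' < ℓ ahat x') := by
  classical
  obtain ⟨θ₀, hθ₀⟩ := Function.ne_iff.mp hne
  obtain ⟨xs, x', hxx⟩ := Fintype.one_lt_card_iff.mp hX
  obtain ⟨hs₀, hs₁⟩ := mem_Icc_of_mem_probSimplex hμs θ₀
  obtain ⟨ht₀, ht₁⟩ := mem_Icc_of_mem_probSimplex hμ' θ₀
  set w₁ : X → ℝ := Pi.single xs (μs θ₀) + Pi.single x' (μ' θ₀)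
  set w₂ : X → ℝ := Pi.single xs (1 - μs θ₀) + Pi.single x' (1 - μ' θ₀)
  have hw₁ : 0 ≤ w₁ := add_nonneg (Pi.single_nonneg.2 hs₀) (Pi.single_nonneg.2 ht₀)
  have hw₂ : 0 ≤ w₂ :=
    add_nonneg (Pi.single_nonneg.2 (by linarith)) (Pi.single_nonneg.2 (by linarith))
  have hmass : 0 < ∑ x, w₁ x ∧ 0 < ∑ x, w₂ x := by
    simp only [w₁, w₂, Pi.add_apply, Finset.sum_add_distrib, Finset.sum_pi_single',
      Finset.mem_univ, if_true]
    rcases hθ₀.lt_or_gt with h | h <;> constructor <;> linarith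
  obtain ⟨a, ha⟩ := exists_isBayesAct hatt hw₁ hmass.1
  obtain ⟨b, hb⟩ := exists_isBayesAct hatt hw₂ hmass.2
  refine ⟨Function.update (fun _ => b) θ₀ a, xs, x', fun ahat => ?_⟩
  have hlt := sum_add_sum_lt_of_isBayesAct hL hw₁ hw₂ hmass.1 hmass.2
    (single_add_single_ne_smul hxx hθ₀) ha hb ahat
  have hw : w₁ + w₂ = Pi.single xs 1 + Pi.single x' 1 := by
    rw [add_add_add_comm, ← Pi.single_add, ← Pi.single_add, add_sub_cancel, add_sub_cancel]
  simp only [hw, w₁, w₂, sum_single_add_single_mul] at hlt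
  rw [sum_mul_update_const hμs.2 θ₀ a b (ℓ · xs), sum_mul_update_const hμ'.2 θ₀ a b (ℓ · x')]
  by_contra! h
  linarith

/-- For a loss with attained, strictly concave Bayes risk, any two distinct mixtures
can be separated: some expert predictions and outcomes force a strict loss gap. -/
theorem stmt_16 {Θ X 𝒜 : Type*} [Fintype Θ] [Nonempty Θ] [Fintype X] [Nonempty 𝒜]
    (hX : 2 ≤ Fintype.card X)
    (ℓ : 𝒜 → X → ℝ)
    (hatt : ∀ p ∈ probSimplex X, ∃ a : 𝒜, ∀ a' : 𝒜,
      ∑ x, p x * ℓ a x ≤ ∑ x, p x * ℓ a' x)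
    (hL : StrictConcaveOn ℝ (probSimplex X) (fun p => ⨅ a : 𝒜, ∑ x, p x * ℓ a x))
    (μs μ' : Θ → ℝ) (hμs : μs ∈ probSimplex Θ) (hμ' : μ' ∈ probSimplex Θ)
    (hne : μs ≠ μ') :
    ∃ A : Θ → 𝒜, ∃ xs x' : X, ∀ ahat : 𝒜,
      (∑ θ, μs θ * ℓ (A θ) xs < ℓ ahat xs) ∨ (∑ θ, μ' θ * ℓ (A θ) x' < ℓ ahat x') :=
  stmt_16_general hX ℓ hatt hL μs μ' hμs hμ' hne
end

section
/- Let Θ and X be finite nonempty sets and 𝒜 a nonempty set. Let Φ be an entropy on Δ_Θ differentiable on relint(Δ_Θ), and suppose Φ is also differentiable (relative to the affine hull of Δ_Θ) at some point π on the relative boundary of Δ_Θ, so that the Bregman divergence D_Φ(·, π) is defined and ‖∇Φ(π)‖ < ∞. Let ℓ : 𝒜 → ℝ^X be a nontrivial loss: there exist x*, x' ∈ X and a*, a' ∈ 𝒜 such that ℓ_{x'}(a') = inf_{a∈𝒜} ℓ_{x'}(a), ℓ_{x*}(a') = inf{ℓ_{x*}(a) : a ∈ 𝒜, ℓ_{x'}(a)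 = inf_{a''∈𝒜} ℓ_{x'}(a'')}, and inf_{a∈𝒜} ℓ_{x*}(a) = ℓ_{x*}(a*) < ℓ_{x*}(a'). Then for every η > 0, ℓ fails the η⁻¹Φ-mixability inequality at π: there exists A ∈ 𝒜^Θ such that for every â ∈ 𝒜 there exist μ ∈ Δ_Θ and x ∈ X with ⟨μ, ℓ_x(A)⟩ + η D_Φ(μ, π) < ℓ_x(â). -/
/-!
Pick a coordinate `θ₀` with `π θ₀ = 0` and play `as` on `θ₀` and `a'` elsewhere. At `μ = π` this
mixture costs `ℓ a' x'` under `x'`, so any `â` that is not optimal for `x'` is beaten with zero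
divergence. An `â` that is optimal for `x'` costs at least `ℓ a' xs` under `xs`; moving from `π`
towards the vertex `θ₀` by `t` lowers the mixture's loss under `xs` by `t (ℓ a' xs - ℓ as xs)`,
while differentiability of `Φ` at `π` makes the divergence `o(t)`, so a small step wins.
-/

open Finset

open Set Filter Topology

theorem HasFDerivAt.exists_mem_Ioo_sub_sub_lt {E : Type*} [NormedAddCommGroup E]
    [NormedSpace ℝ E] {f : E → ℝ} {f' : E →L[ℝ] ℝ} {x : E} (hf : HasFDerivAt f f' x) (v : E)
    {c : ℝ} (hc : 0 < c) : ∃ t ∈ Ioo (0 : ℝ) 1, f (x + t • v) - f x - t * f' v < t * c := by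
  have hline : HasDerivAt (fun t : ℝ => f (x + t • v)) (f' v) 0 := by
    have := ((hasDerivAt_id (0 : ℝ)).smul_const v).const_add x
    simp only [id, one_smul] at this
    exact hf.comp_hasDerivAt_of_eq 0 this (by simp)
  have hslope : ∀ᶠ t in 𝓝[>] (0 : ℝ), t⁻¹ * (f (x + t • v) - f x) < f' v + c := by
    simpa using hline.tendsto_slope_zero_right.eventually_lt_const (lt_add_of_pos_right _ hc)
  obtain ⟨t, ht, hlt⟩ := (Eventually.and (Ioo_mem_nhdsGT one_pos) hslope).exists
  refine ⟨t, ht, ?_⟩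
  rw [inv_mul_lt_iff₀ ht.1] at hlt
  linarith

theorem pairCLM_apply_s19 {Θ : Type*} [Fintype Θ] (w u : Θ → ℝ) : pairCLM w u = ip u w := by
  simp [pairCLM, ip, mul_comm]

theorem ip_ite {Θ : Type*} [Fintype Θ] [DecidableEq Θ] {μ : Θ → ℝ} (hμ : ∑ θ, μ θ = 1)
    (θ₀ : Θ) (u w : ℝ) :
    ip μ (fun θ => if θ = θ₀ then u else w) = μ θ₀ * u + (1 - μ θ₀) * w := by
  have hterm : ∀ θ, μ θ * (if θ = θ₀ then u else w) = μ θ * w + if θ = θ₀ then μ θ * (u - w) else 0 := by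
    intro θ; split_ifs <;> ring
  simp [ip, hterm, sum_add_distrib, ← sum_mul, hμ]
  ring

theorem probSimplex_eq_stdSimplex (Θ : Type*) [Fintype Θ] : probSimplex Θ = stdSimplex ℝ Θ := rfl

theorem exists_eq_zero_of_not_mem_probRelint {Θ : Type*} [Fintype Θ] {π : Θ → ℝ}
    (hπ : π ∈ probSimplex Θ) (hπb : π ∉ probRelint Θ) : ∃ θ, π θ = 0 := by
  by_contra! h
  exact hπb ⟨fun θ => (hπ.1 θ).lt_of_ne (h θ).symm, hπ.2⟩

theorem stmt_19_general {Θ X 𝒜 : Type*} [Fintype Θ]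
    (Φ : (Θ → ℝ) → ℝ)
    (π : Θ → ℝ) (hπ : π ∈ probSimplex Θ) (hπb : π ∉ probRelint Θ)
    (gπ : Θ → ℝ) (hgπ : HasFDerivAt Φ (pairCLM gπ) π)
    (ℓ : 𝒜 → X → ℝ)
    (xs x' : X) (as a' : 𝒜)
    (ha'min : ∀ a : 𝒜, ℓ a' x' ≤ ℓ a x')
    (ha'best : ∀ a : 𝒜, (∀ b : 𝒜, ℓ a x' ≤ ℓ b x') → ℓ a' xs ≤ ℓ a xs)
    (hlt : ℓ as xs < ℓ a' xs)
    (η : ℝ) (hη : 0 < η) :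
    ∃ A : Θ → 𝒜, ∀ ahat : 𝒜, ∃ μ ∈ probSimplex Θ, ∃ x : X,
      ip μ (fun θ => ℓ (A θ) x) + η * (Φ μ - Φ π - ip (μ - π) gπ) < ℓ ahat x := by
  classical
  obtain ⟨θ₀, hθ₀⟩ := exists_eq_zero_of_not_mem_probRelint hπ hπb
  have hmix : ∀ μ ∈ probSimplex Θ, ∀ x, ip μ (fun θ => ℓ (if θ = θ₀ then as else a') x)
      = μ θ₀ * ℓ as x + (1 - μ θ₀) * ℓ a' x := fun μ hμ x => by
    simpa only [apply_ite (ℓ · x)] using ip_ite hμ.2 θ₀ (ℓ as x) (ℓ a' x)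
  refine ⟨fun θ => if θ = θ₀ then as else a', fun ahat => ?_⟩
  by_cases hopt : ∀ b, ℓ ahat x' ≤ ℓ b x'
  · set v : Θ → ℝ := Pi.single θ₀ 1 - π
    obtain ⟨t, ht, hdiv⟩ :=
      hgπ.exists_mem_Ioo_sub_sub_lt v (div_pos (sub_pos.2 hlt) hη)
    have hμ : π + t • v ∈ probSimplex Θ := by
      rw [probSimplex_eq_stdSimplex] at hπ ⊢
      exact (convex_stdSimplex ℝ Θ).add_smul_sub_mem hπ (single_mem_stdSimplex ℝ θ₀)
        (Ioo_subset_Icc_self ht)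
    have hμθ₀ : (π + t • v) θ₀ = t := by simp [v, hθ₀]
    have hip : ip (π + t • v - π) gπ = t * pairCLM gπ v := by
      rw [← pairCLM_apply_s19, add_sub_cancel_left, map_smul, smul_eq_mul]
    refine ⟨π + t • v, hμ, xs, ?_⟩
    rw [hmix _ hμ, hμθ₀, hip]
    rw [mul_div_assoc', lt_div_iff₀ hη] at hdiv
    linarith [ha'best ahat hopt]
  · obtain ⟨b, hb⟩ := not_forall.1 hopt
    refine ⟨π, hπ, x', ?_⟩
    have hdiv : Φ π - Φ π - ip (π - π) gπ = 0 := by simp [ip]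
    rw [hmix π hπ, hθ₀, hdiv]
    linarith [not_le.1 hb, ha'min b]

/-- If `Φ` is differentiable at a relative-boundary point `π` (with gradient `gπ`),
then every nontrivial loss fails the mixability inequality at `π`, at every scale. -/
theorem stmt_19 {Θ X 𝒜 : Type*} [Fintype Θ] [Nonempty Θ] [Fintype X] [Nonempty X]
    [Nonempty 𝒜]
    (Φ : (Θ → ℝ) → ℝ)
    (hconv : ConvexOn ℝ (probSimplex Θ) Φ)
    (hlsc : LowerSemicontinuousOn Φ (probSimplex Θ))
    (g : (Θ → ℝ) → Θ → ℝ)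
    (hg : ∀ μ ∈ probRelint Θ, HasFDerivAt Φ (pairCLM (g μ)) μ)
    (π : Θ → ℝ) (hπ : π ∈ probSimplex Θ) (hπb : π ∉ probRelint Θ)
    (gπ : Θ → ℝ) (hgπ : HasFDerivAt Φ (pairCLM gπ) π)
    (ℓ : 𝒜 → X → ℝ)
    (xs x' : X) (as a' : 𝒜)
    (ha'min : ∀ a : 𝒜, ℓ a' x' ≤ ℓ a x')
    (ha'best : ∀ a : 𝒜, (∀ b : 𝒜, ℓ a x' ≤ ℓ b x') → ℓ a' xs ≤ ℓ a xs)
    (hasmin : ∀ a : 𝒜, ℓ as xs ≤ ℓ a xs)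
    (hlt : ℓ as xs < ℓ a' xs)
    (η : ℝ) (hη : 0 < η) :
    ∃ A : Θ → 𝒜, ∀ ahat : 𝒜, ∃ μ ∈ probSimplex Θ, ∃ x : X,
      ip μ (fun θ => ℓ (A θ) x) + η * (Φ μ - Φ π - ip (μ - π) gπ) < ℓ ahat x :=
  stmt_19_general Φ π hπ hπb gπ hgπ ℓ xs x' as a' ha'min ha'best hlt η hη
end
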